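/- arXiv:1508.01464 — 2 statements merged into one kernel-verified Lean document; each statement's English description precedes it below -/
import Mathlib

section
/- Let g be a nonnegative, not identically zero, function on a finite set with uniform measure. Then Ent(g²) ≥ (E g² / E g) · Ent(g); in particular Ent(g²) ≥ (E g)·Ent(g). -/
/-!
Write `N = |α|`, `A = ∑ g`, `B = ∑ g²`, `S₁ = ∑ g log g`, `S₂ = ∑ g² log g`. Up to the factor
`N log 2`, `Ent g = S₁ - A log (A/N)` and `Ent g² = 2 S₂ - B log (B/N)`; since
`log (B/N) = log (B/A) + log (A/N)`, the first inequality reduces to `(B/A) S₁ ≤ 2 S₂ - B log (B/A)`.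
This follows from two facts about the probability weights `g/A`: Chebyshev's sum inequality for
the monovarying pair `g`, `log g` gives `B S₁ ≤ A S₂`, and Jensen's inequality for `x log x` gives
`B log (B/A) ≤ S₂`. The second inequality follows from the first since `Ent g ≥ 0` (Jensen again)
and `E g ≤ E g² / E g` (Cauchy–Schwarz).
-/

open Finset

/-- The boolean cube `{0,1}^n`. -/
abbrev Cube (n : ℕ) := Fin n → Bool

/-- Expectation over a uniform point of the cube. -/
noncomputable def EX {n : ℕ} (f : Cube n → ℝ) : ℝ :=
  (∑ x : Cube n, f x) / (2 ^ n : ℝ)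

/-- The entropy functional `Ent(f) = E f log₂ f - (E f) log₂ (E f)`. -/
noncomputable def Ent {n : ℕ} (f : Cube n → ℝ) : ℝ :=
  EX (fun x => f x * Real.logb 2 (f x)) - EX f * Real.logb 2 (EX f)

/-- The noise operator `T_ε`. -/
noncomputable def noiseOp {n : ℕ} (ε : ℝ) (f : Cube n → ℝ) : Cube n → ℝ :=
  fun x => ∑ y : Cube n, ε ^ (hammingDist y x) * (1 - ε) ^ (n - hammingDist y x) * f y

/-- Binary entropy function (base 2). -/
noncomputable def H2 (x : ℝ) : ℝ :=
  -(x * Real.logb 2 x) - (1 - x) * Real.logb 2 (1 - x)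

/-- The inverse of the binary entropy function, `H₂⁻¹ : [0,1] → [0,1/2]`. -/
noncomputable def H2inv (y : ℝ) : ℝ :=
  Function.invFunOn H2 (Set.Icc 0 (1 / 2)) y

/-- Mrs. Gerber's function `φ(x, ε)`. -/
noncomputable def phi (x ε : ℝ) : ℝ :=
  1 - H2 ((1 - 2 * ε) * H2inv (1 - x) + ε)

/-- Conditional expectation of `f` given the coordinates in `A`,
viewed as a function on the cube depending only on coordinates in `A`. -/
noncomputable def condE {n : ℕ} (f : Cube n → ℝ) (A : Finset (Fin n)) : Cube n → ℝ :=
  fun x => (∑ z : Cube n, f (fun i => if i ∈ A then x i else z i)) / (2 ^ n : ℝ)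

/-- `Ent(f | A) = Ent(E(f | A))`. -/
noncomputable def EntC {n : ℕ} (f : Cube n → ℝ) (A : Finset (Fin n)) : ℝ :=
  Ent (condE f A)

/-- Expectation over a random subset `T ⊆ [n]` obtained by including each element
independently with probability `l`. -/
noncomputable def ETsub {n : ℕ} (l : ℝ) (g : Finset (Fin n) → ℝ) : ℝ :=
  ∑ T : Finset (Fin n), l ^ T.card * (1 - l) ^ (n - T.card) * g T


/-- Marginal of a distribution `p` on the cube on the coordinates in `T`
(as a function on the cube, depending only on the coordinates in `T`). -/
noncomputable def marg {n : ℕ} (p : Cube n → ℝ) (T : Finset (Fin n)) (x : Cube n) : ℝ :=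
  ∑ y : Cube n, if ∀ i ∈ T, y i = x i then p y else 0

/-- Shannon entropy (base 2) of the marginal of `p` on the coordinates in `T`:
the sum goes over canonical representatives (coordinates outside `T` set to `false`). -/
noncomputable def margEnt {n : ℕ} (p : Cube n → ℝ) (T : Finset (Fin n)) : ℝ :=
  -∑ x : Cube n,
      if ∀ i ∉ T, x i = false then marg p T x * Real.logb 2 (marg p T x) else 0

/-- Shannon entropy (base 2) of a probability distribution on the cube. -/
noncomputable def shEnt {n : ℕ} (p : Cube n → ℝ) : ℝ :=
  -∑ y : Cube n, p y * Real.logb 2 (p y)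

/-- Walsh function `W_S(x) = (-1)^{∑_{i ∈ S} x_i}`. -/
def walsh {n : ℕ} (S : Finset (Fin n)) (x : Cube n) : ℝ :=
  ∏ i ∈ S, (if x i then (-1 : ℝ) else 1)

/-- Walsh–Fourier coefficient `f̂(S) = E_x f(x) W_S(x)`. -/
noncomputable def fourierCoef {n : ℕ} (f : Cube n → ℝ) (S : Finset (Fin n)) : ℝ :=
  EX (fun x => f x * walsh S x)

/-- The noise operator `T_{ε,R}` acting only in the directions in `R`
(the composition of the directional noise operators `T_{ε,i}`, `i ∈ R`). -/
noncomputable def noiseOpOn {n : ℕ} (ε : ℝ) (R : Finset (Fin n)) (g : Cube n → ℝ) :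
    Cube n → ℝ :=
  fun x => ∑ y : Cube n,
    (if ∀ i ∉ R, y i = x i then ∏ i ∈ R, (if y i = x i then 1 - ε else ε) else 0) * g y

/-- `I_g(A,m) = Ent(g | A ∪ {m}) - Ent(g | A) - Ent(g | {m})`. -/
noncomputable def Ifun {n : ℕ} (g : Cube n → ℝ) (A : Finset (Fin n)) (m : Fin n) : ℝ :=
  EntC g (insert m A) - EntC g A - EntC g {m}

/-- `Z_{S;i,j}(f) = Ent(f|S∪{i,j}) - Ent(f|S∪{i}) - Ent(f|S∪{j}) + Ent(f|S)`. -/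
noncomputable def Zfun {n : ℕ} (f : Cube n → ℝ) (S : Finset (Fin n)) (i j : Fin n) : ℝ :=
  EntC f (insert i (insert j S)) - EntC f (insert i S) - EntC f (insert j S) + EntC f S

/-- `Y(A,m,s)`: the average of `Z_{S;i,m}(f)` over subsets `S ⊆ A` with `|S| = s - 1`
and over `i ∈ A \ S`. -/
noncomputable def Yavg {n : ℕ} (f : Cube n → ℝ) (A : Finset (Fin n)) (m : Fin n) (s : ℕ) : ℝ :=
  (∑ S ∈ A.powerset.filter (fun S => S.card = s - 1), ∑ i ∈ A \ S, Zfun f S i m) /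
    (∑ S ∈ A.powerset.filter (fun S => S.card = s - 1), ((A \ S).card : ℝ))

/-- `Λ(k,s,λ) = 1 - ∑_{j=0}^{s-1} C(k,j) λ^j (1-λ)^{k-j}`. -/
noncomputable def Lam (k s : ℕ) (l : ℝ) : ℝ :=
  1 - ∑ j ∈ Finset.range s, (Nat.choose k j : ℝ) * l ^ j * (1 - l) ^ (k - j)

/-- `t_s`: the average of `Z_{S;i,j}(f)` over subsets `S ⊆ [n]` with `|S| = s - 1`
and over distinct `i, j ∉ S`. -/
noncomputable def tAvg {n : ℕ} (f : Cube n → ℝ) (s : ℕ) : ℝ :=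
  (∑ S ∈ (Finset.univ : Finset (Finset (Fin n))).filter (fun S => S.card = s - 1),
      ∑ i ∈ Sᶜ, ∑ j ∈ Sᶜ \ {i}, Zfun f S i j) /
    (∑ S ∈ (Finset.univ : Finset (Finset (Fin n))).filter (fun S => S.card = s - 1),
      ∑ i ∈ Sᶜ, ((Sᶜ \ {i}).card : ℝ))

/-- The entropy functional on an arbitrary finite set with uniform measure. -/
noncomputable def entFin {α : Type*} [Fintype α] (g : α → ℝ) : ℝ :=
  (∑ a, g a * Real.logb 2 (g a)) / (Fintype.card α : ℝ) -
    ((∑ a, g a) / (Fintype.card α : ℝ)) * Real.logb 2 ((∑ a, g a) / (Fintype.card α : ℝ))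

theorem MonovaryOn.sum_mul_sum_mul_le_sum_mul_sum_mul_mul {ι R : Type*} [CommRing R]
    [LinearOrder R] [IsStrictOrderedRing R] {s : Finset ι} {w f g : ι → R}
    (hfg : MonovaryOn f g (↑s ∩ Function.support w)) (hw : ∀ i ∈ s, 0 ≤ w i) :
    (∑ i ∈ s, w i * f i) * (∑ i ∈ s, w i * g i) ≤
      (∑ i ∈ s, w i) * ∑ i ∈ s, w i * f i * g i := by
  have hterm : ∀ i ∈ s, ∀ j ∈ s, 0 ≤ w i * w j * ((f j - f i) * (g j - g i)) := by
    intro i hi j hj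
    by_cases hwi : w i = 0
    · simp [hwi]
    by_cases hwj : w j = 0
    · simp [hwj]
    exact mul_nonneg (mul_nonneg (hw i hi) (hw j hj))
      (hfg.sub_mul_sub_nonneg ⟨hi, hwi⟩ ⟨hj, hwj⟩)
  set a : ι → ι → R := fun i j => w i * (w j * f j * g j) - w i * f i * (w j * g j)
  have hexpand : ∑ i ∈ s, ∑ j ∈ s, w i * w j * ((f j - f i) * (g j - g i)) =
      2 * ((∑ i ∈ s, w i) * ∑ i ∈ s, w i * f i * g i -
        (∑ i ∈ s, w i * f i) * (∑ i ∈ s, w i * g i)) :=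
    calc _ = ∑ i ∈ s, ∑ j ∈ s, (a i j + a j i) :=
          sum_congr rfl fun i _ => sum_congr rfl fun j _ => by ring
      _ = 2 * ∑ i ∈ s, ∑ j ∈ s, a i j := by
          rw [two_mul]
          simp only [sum_add_distrib]
          rw [sum_comm (f := fun i j => a j i)]
      _ = _ := by simp only [a, sum_sub_distrib, sum_mul_sum]
  have := sum_nonneg fun i hi => sum_nonneg fun j hj => hterm i hi j hj
  rw [hexpand] at this
  linarith

theorem Real.sum_mul_log_div_le_sum_mul_mul_log {ι : Type*} {s : Finset ι} {w x : ι → ℝ}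
    (hw : ∀ i ∈ s, 0 ≤ w i) (hx : ∀ i ∈ s, 0 ≤ x i) :
    (∑ i ∈ s, w i * x i) * Real.log ((∑ i ∈ s, w i * x i) / ∑ i ∈ s, w i) ≤
      ∑ i ∈ s, w i * (x i * Real.log (x i)) := by
  rcases (sum_nonneg hw).eq_or_lt with hW | hW
  · have hw0 : ∀ i ∈ s, w i = 0 := (sum_eq_zero_iff_of_nonneg hw).mp hW.symm
    simp +contextual [hw0]
  have h := Real.convexOn_mul_log.map_sum_le (t := s) (w := fun i => w i / ∑ j ∈ s, w j)
    (p := x) (fun i hi => div_nonneg (hw i hi) hW.le) (by rw [← sum_div, div_self hW.ne']) hx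
  simp only [smul_eq_mul, div_mul_eq_mul_div, ← sum_div] at h
  rwa [div_le_div_iff_of_pos_right hW] at h

theorem Real.sum_sq_mul_sum_mul_log_le_sum_mul_sum_sq_mul_log {ι : Type*} {s : Finset ι}
    {g : ι → ℝ} (hg : ∀ i ∈ s, 0 ≤ g i) :
    (∑ i ∈ s, g i ^ 2) * ∑ i ∈ s, g i * Real.log (g i) ≤
      (∑ i ∈ s, g i) * ∑ i ∈ s, g i ^ 2 * Real.log (g i) := by
  -- `log 0 = 0` breaks monotonicity of `log` at `0`, but the weight `g` vanishes there.
  have hmono : MonovaryOn g (Real.log ∘ g) (↑s ∩ Function.support g) :=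
    (monovaryOn_self g _).comp_monotoneOn_right <| Real.strictMonoOn_log.monotoneOn.mono <| by
      rintro _ ⟨i, ⟨his, hi⟩, rfl⟩
      exact (hg i his).lt_of_ne' hi
  have h := hmono.sum_mul_sum_mul_le_sum_mul_sum_mul_mul hg
  simp only [Function.comp_apply, ← sq] at h
  linarith

section entFin

variable {α : Type*} [Fintype α] [Nonempty α]

theorem entFin_mul_card_mul_log_two (g : α → ℝ) :
    entFin g * (Fintype.card α * Real.log 2) =
      ∑ a, g a * Real.log (g a) - (∑ a, g a) * Real.log ((∑ a, g a) / Fintype.card α) := by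
  have hN : (Fintype.card α : ℝ) ≠ 0 := Nat.cast_ne_zero.mpr Fintype.card_ne_zero
  have hL : Real.log 2 ≠ 0 := by positivity
  simp only [entFin, Real.logb, mul_div_assoc', ← sum_div]
  field_simp

theorem entFin_nonneg {g : α → ℝ} (hg : ∀ a, 0 ≤ g a) : 0 ≤ entFin g := by
  have hjensen := Real.sum_mul_log_div_le_sum_mul_mul_log (s := univ) (w := fun _ => 1) (x := g)
    (fun _ _ => zero_le_one) (fun a _ => hg a)
  simp only [one_mul, sum_const, card_univ, nsmul_eq_mul, mul_one] at hjensen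
  have hpos : (0 : ℝ) < Fintype.card α * Real.log 2 := by positivity
  have := entFin_mul_card_mul_log_two g
  nlinarith

theorem sum_sq_div_sum_mul_entFin_le_entFin_sq {g : α → ℝ} (hg : ∀ a, 0 ≤ g a)
    (hA : 0 < ∑ a, g a) :
    (∑ a, g a ^ 2) / (∑ a, g a) * entFin g ≤ entFin (fun a => g a ^ 2) := by
  set N : ℝ := (Fintype.card α : ℝ)
  set A := ∑ a, g a
  set B := ∑ a, g a ^ 2
  set S₁ := ∑ a, g a * Real.log (g a)
  set S₂ := ∑ a, g a ^ 2 * Real.log (g a)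
  have hN : 0 < N := by positivity
  have hB : 0 < B := by
    obtain ⟨a, -, ha⟩ := exists_lt_of_sum_lt (by simpa using hA : ∑ _ : α, (0 : ℝ) < A)
    exact sum_pos' (fun a _ => sq_nonneg (g a)) ⟨a, mem_univ a, by positivity⟩
  have hEnt : entFin g * (N * Real.log 2) = S₁ - A * Real.log (A / N) :=
    entFin_mul_card_mul_log_two g
  have hEntSq : entFin (fun a => g a ^ 2) * (N * Real.log 2) = 2 * S₂ - B * Real.log (B / N) := by
    rw [entFin_mul_card_mul_log_two]
    simp only [Real.log_pow, Nat.cast_ofNat, S₂, mul_sum]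
    congr 1
    exact sum_congr rfl fun a _ => by ring
  have hcheb : B * S₁ ≤ A * S₂ :=
    Real.sum_sq_mul_sum_mul_log_le_sum_mul_sum_sq_mul_log fun a _ => hg a
  have hjensen : B * Real.log (B / A) ≤ S₂ := by
    have h := Real.sum_mul_log_div_le_sum_mul_mul_log (s := univ) (w := g) (x := g)
      (fun a _ => hg a) (fun a _ => hg a)
    simp only [← mul_assoc, ← sq] at h
    exact h
  have hlog : Real.log (B / N) = Real.log (B / A) + Real.log (A / N) := by
    rw [← Real.log_mul (by positivity) (by positivity), div_mul_div_cancel₀ hA.ne']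
  refine le_of_mul_le_mul_right ?_ (by positivity : 0 < N * Real.log 2)
  rw [mul_assoc, hEnt, hEntSq, hlog]
  calc B / A * (S₁ - A * Real.log (A / N)) = B / A * S₁ - B * Real.log (A / N) := by
        rw [mul_sub, ← mul_assoc, div_mul_cancel₀ B hA.ne']
    _ ≤ S₂ - B * Real.log (A / N) := by
        gcongr
        rw [div_mul_eq_mul_div, div_le_iff₀ hA]
        linarith
    _ ≤ 2 * S₂ - B * (Real.log (B / A) + Real.log (A / N)) := by linarith

end entFin

theorem stmt17_general {α : Type*} [Fintype α] (g : α → ℝ)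
    (hg : ∀ a, 0 ≤ g a) (hne : ∃ a, g a ≠ 0) :
    ((∑ a, (g a) ^ 2) / (Fintype.card α : ℝ)) / ((∑ a, g a) / (Fintype.card α : ℝ)) *
        entFin g ≤ entFin (fun a => (g a) ^ 2) ∧
      ((∑ a, g a) / (Fintype.card α : ℝ)) * entFin g ≤ entFin (fun a => (g a) ^ 2) := by
  obtain ⟨a₀, ha₀⟩ := hne
  have : Nonempty α := ⟨a₀⟩
  have hN : (0 : ℝ) < Fintype.card α := by positivity
  have hA : 0 < ∑ a, g a := sum_pos' (fun a _ => hg a) ⟨a₀, mem_univ _, (hg a₀).lt_of_ne' ha₀⟩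
  have hmain := sum_sq_div_sum_mul_entFin_le_entFin_sq hg hA
  rw [div_div_div_cancel_right₀ hN.ne']
  refine ⟨hmain, le_trans (mul_le_mul_of_nonneg_right ?_ (entFin_nonneg hg)) hmain⟩
  rw [div_le_div_iff₀ hN hA, ← sq, mul_comm]
  simpa using sq_sum_le_card_mul_sum_sq (s := univ) (f := g)

/-- for a nonnegative, not identically zero function `g` on a finite set
with uniform measure, `Ent(g²) ≥ (E g²/E g) Ent(g)`; in particular
`Ent(g²) ≥ (E g) Ent(g)`. -/
theorem stmt17 {α : Type*} [Fintype α] [Nonempty α] (g : α → ℝ)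
    (hg : ∀ a, 0 ≤ g a) (hne : ∃ a, g a ≠ 0) :
    ((∑ a, (g a) ^ 2) / (Fintype.card α : ℝ)) / ((∑ a, g a) / (Fintype.card α : ℝ)) *
        entFin g ≤ entFin (fun a => (g a) ^ 2) ∧
      ((∑ a, g a) / (Fintype.card α : ℝ)) * entFin g ≤ entFin (fun a => (g a) ^ 2) :=
  stmt17_general g hg hne
end

section
/- Let g : {0,1}^n → ℝ be nonnegative with E_x g = 1. For x ∈ {0,1}^n let x^c denote its coordinatewise complement, and set g₀(x) = (g(x) + g(x^c))/2 (the 'even part') and g₁ = g − g₀ (the 'odd part'); note |g₁| ≤ g₀. Then Ent(g) = Ent(g₀) + E_x [ g₀(x)·( 1 − H₂( (1 − |g₁(x)|/g₀(x)) / 2 ) ) ], where the summand is interpreted as 0 at points x with g₀(x) = 0. -/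
open Finset

/-!
Pair each point `x` with its complement `xᶜ`. Since complementation is a measure-preserving
involution, `g` and its even part `g₀` have the same mean, and `E g log₂ g` is the mean of
`(g(x) log₂ g(x) + g(xᶜ) log₂ g(xᶜ)) / 2`. The theorem is then the grouping rule for entropy
applied on every pair `{x, xᶜ}`: for `a, b ≥ 0` with mean `m`,
`(a log₂ a + b log₂ b) / 2 = m log₂ m + m (1 - H₂(a / (a + b)))`, and `H₂(a / (a + b))` is the
`H₂` term of the statement because `(1 - |a - m| / m) / 2` is `a / (a + b)` or `b / (a + b)`.
-/

open Real

lemma H2_one_sub (p : ℝ) : H2 (1 - p) = H2 p := by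
  unfold H2
  rw [sub_sub_cancel]
  ring

lemma H2_half_one_sub_abs_sub_mean {a b : ℝ} (h : a + b ≠ 0) :
    H2 ((1 - |a - (a + b) / 2| / ((a + b) / 2)) / 2) = H2 (a / (a + b)) := by
  rcases abs_cases (a - (a + b) / 2) with ⟨habs, -⟩ | ⟨habs, -⟩
  · have harg : (1 - (a - (a + b) / 2) / ((a + b) / 2)) / 2 = 1 - a / (a + b) := by
      field_simp
      ring
    rw [habs, harg, H2_one_sub]
  · have harg : (1 - -(a - (a + b) / 2) / ((a + b) / 2)) / 2 = a / (a + b) := by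
      field_simp
      ring
    rw [habs, harg]

lemma mul_logb_div (a : ℝ) {s : ℝ} (hs : s ≠ 0) :
    a * logb 2 (a / s) = a * logb 2 a - a * logb 2 s := by
  rcases eq_or_ne a 0 with rfl | ha
  · simp
  · rw [logb_div ha hs]
    ring

/-- The grouping rule for entropy. -/
lemma mul_logb_add_mul_logb (a b : ℝ) (h : a + b ≠ 0) :
    a * logb 2 a + b * logb 2 b =
      (a + b) * logb 2 (a + b) - (a + b) * H2 (a / (a + b)) := by
  have hb : 1 - a / (a + b) = b / (a + b) := by
    field_simp
    ring
  have hscale : ∀ c, (a + b) * (c / (a + b) * logb 2 (c / (a + b))) = c * logb 2 (c / (a + b)) :=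
    fun c => by field_simp
  unfold H2
  rw [hb, mul_sub, mul_neg, hscale, hscale, mul_logb_div a h, mul_logb_div b h]
  ring

lemma mean_mul_logb_eq {a b : ℝ} (ha : 0 ≤ a) (hb : 0 ≤ b) :
    (a * logb 2 a + b * logb 2 b) / 2 =
      ((a + b) / 2) * logb 2 ((a + b) / 2) +
        ((a + b) / 2) * (1 - H2 ((1 - |a - (a + b) / 2| / ((a + b) / 2)) / 2)) := by
  rcases eq_or_ne (a + b) 0 with h | h
  · obtain ⟨rfl, rfl⟩ : a = 0 ∧ b = 0 := ⟨by linarith, by linarith⟩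
    simp
  · have hhalf : logb 2 ((a + b) / 2) = logb 2 (a + b) - 1 := by
      rw [logb_div h two_ne_zero, logb_self_eq_one one_lt_two]
    rw [H2_half_one_sub_abs_sub_mean h, hhalf, mul_logb_add_mul_logb a b h]
    ring

namespace Cube

variable {n : ℕ}

lemma EX_add (f h : Cube n → ℝ) : EX (fun x => f x + h x) = EX f + EX h := by
  unfold EX
  rw [sum_add_distrib, add_div]

def compl (x : Cube n) : Cube n := fun i => !x i

lemma compl_involutive : Function.Involutive (compl (n := n)) :=
  fun x => funext fun i => Bool.not_not (x i)

noncomputable def evenPart (g : Cube n → ℝ) (x : Cube n) : ℝ :=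
  (g x + g (compl x)) / 2

lemma EX_evenPart (g : Cube n → ℝ) : EX (evenPart g) = EX g := by
  have hcompl : ∑ x, g (compl x) = ∑ x, g x :=
    Fintype.sum_bijective _ compl_involutive.bijective _ _ fun _ => rfl
  unfold EX evenPart
  rw [← sum_div, sum_add_distrib, hcompl]
  ring

lemma EX_mul_logb_eq {g : Cube n → ℝ} (hg : ∀ x, 0 ≤ g x) :
    EX (fun x => g x * logb 2 (g x)) =
      EX (fun x => evenPart g x * logb 2 (evenPart g x)) +
        EX (fun x => evenPart g x *
          (1 - H2 ((1 - |g x - evenPart g x| / evenPart g x) / 2))) := by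
  rw [← EX_evenPart (fun x => g x * logb 2 (g x)), ← EX_add]
  exact congrArg EX (funext fun x => mean_mul_logb_eq (hg x) (hg (compl x)))

end Cube

theorem stmt18_general {n : ℕ} (g : Cube n → ℝ) (hg : ∀ x, 0 ≤ g x) :
    Ent g =
      Ent (fun x => (g x + g (fun i => !x i)) / 2) +
        EX (fun x =>
          ((g x + g (fun i => !x i)) / 2) *
            (1 - H2 ((1 -
              |g x - (g x + g (fun i => !x i)) / 2| /
                ((g x + g (fun i => !x i)) / 2)) / 2))) := by
  have hmean := Cube.EX_evenPart g
  have hlog := Cube.EX_mul_logb_eq hg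
  unfold Cube.evenPart Cube.compl at hmean hlog
  unfold Ent
  rw [hmean, hlog]
  ring

/-- for nonnegative `g` with `E g = 1`, writing `g₀(x) = (g(x)+g(xᶜ))/2`
and `g₁ = g - g₀`, one has
`Ent(g) = Ent(g₀) + E_x g₀(x) (1 - H₂((1 - |g₁(x)|/g₀(x))/2))`
(the summand being 0 at points with `g₀(x) = 0`). -/
theorem stmt18 {n : ℕ} (g : Cube n → ℝ) (hg : ∀ x, 0 ≤ g x) (hEg : EX g = 1) :
    Ent g =
      Ent (fun x => (g x + g (fun i => !x i)) / 2) +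
        EX (fun x =>
          ((g x + g (fun i => !x i)) / 2) *
            (1 - H2 ((1 -
              |g x - (g x + g (fun i => !x i)) / 2| /
                ((g x + g (fun i => !x i)) / 2)) / 2))) :=
  stmt18_general g hg
end
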